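/- Let N ≥ 6 and γ > 0, and let P := {(y', y_N) ∈ ℝ^{N−1}×ℝ : y_N > 0, |y'| < γ √y_N} be a round paraboloid. Then the Newtonian potential V_P(x) = α_N ∫_P |x−y|^{2−N} dy satisfies sup_{x ∈ ℝ^N, |x| ≥ k, x_N ≤ k/2} V_P(x) → 0 as k → ∞. -/

import Mathlib

/-!
Slice the paraboloid by the height `k + y_N ∈ [s²/4, s²)`, `s = 2^(j+1) √k`. For `x` in the region
and `k ≥ 16γ²`, every `y` in the paraboloid has `|x - y| ≥ (k + y_N)/4`: if `y_N ≥ k` because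
`y_N - x_N ≥ y_N - k/2`, and if `y_N < k` because `x` is at distance `≥ 3k/4` from the axis point
`y_N e_N` (as `x_N ≤ k/2`) while `y` is within `γ √k ≤ k/4` of it. On a slice the kernel is thus
`≤ (s²/16)^(2-N)`, and the slice lies in a box of volume `(2γs)^(N-1) s²`, so it contributes
`≲ s^(5-N) ≤ 1/s` as `N ≥ 6`; summing the geometric series in `j` gives `V_P(x) ≲ k^(-1/2)`.
-/

open MeasureTheory Metric Set Filter Topology

theorem Real.rpow_two_sub_natCast {a : ℝ} (ha : 0 ≤ a) {n : ℕ} (hn : 2 ≤ n) :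
    a ^ ((2 : ℝ) - n) = (a ^ (n - 2))⁻¹ := by
  rw [show (2 : ℝ) - n = -((n - 2 : ℕ) : ℝ) by push_cast [Nat.cast_sub hn]; ring,
    Real.rpow_neg ha, Real.rpow_natCast]

theorem inv_pow_mul_pow_le_div_of_six_le {n : ℕ} (hn : 6 ≤ n) {a s : ℝ} (ha : 0 ≤ a)
    (hs : 1 ≤ s) :
    ((s ^ 2 / 16) ^ (n - 2))⁻¹ * ((a * s) ^ (n - 1) * s ^ 2) ≤ 16 ^ (n - 2) * a ^ (n - 1) / s := by
  obtain ⟨e, he, rfl⟩ : ∃ e, 4 ≤ e ∧ n = e + 2 := ⟨n - 2, by omega, by omega⟩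
  rw [show e + 2 - 1 = e + 1 by omega, Nat.add_sub_cancel]
  have hs0 : 0 < s := by linarith
  rw [div_pow, ← pow_mul, inv_div, mul_pow, le_div_iff₀ hs0]
  calc 16 ^ e / s ^ (2 * e) * (a ^ (e + 1) * s ^ (e + 1) * s ^ 2) * s
      = 16 ^ e * a ^ (e + 1) * (s ^ (e + 4) / s ^ (2 * e)) := by ring
    _ ≤ 16 ^ e * a ^ (e + 1) * 1 := by
      gcongr
      exact div_le_one_of_le₀ (pow_le_pow_right₀ hs (by omega)) (by positivity)
    _ = 16 ^ e * a ^ (e + 1) := mul_one _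

theorem setLIntegral_ofReal_rpow_norm_sub_le {E : Type*} [NormedAddCommGroup E]
    [MeasurableSpace E] {μ : Measure E} {S : Set E} {x : E} {d p : ℝ} (hd : 0 < d) (hp : p ≤ 0)
    (h : ∀ y ∈ S, d ≤ ‖x - y‖) :
    ∫⁻ y in S, ENNReal.ofReal (‖x - y‖ ^ p) ∂μ ≤ ENNReal.ofReal (d ^ p) * μ S := by
  rw [← setLIntegral_const]
  exact setLIntegral_mono measurable_const fun y hy =>
    ENNReal.ofReal_le_ofReal (Real.rpow_le_rpow_of_nonpos hd (h y hy) hp)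

section

variable {ι : Type*} [Fintype ι]

theorem EuclideanSpace.volume_setOf_forall_mem_Icc (a b : ι → ℝ) :
    volume {y : EuclideanSpace ℝ ι | ∀ i, y i ∈ Icc (a i) (b i)} =
      ∏ i, ENNReal.ofReal (b i - a i) := by
  have hbox : {y : EuclideanSpace ℝ ι | ∀ i, y i ∈ Icc (a i) (b i)} =
      (MeasurableEquiv.toLp 2 (ι → ℝ)).symm ⁻¹' Icc a b := by
    ext y
    simp [Pi.le_def, forall_and]
  rw [hbox, (EuclideanSpace.volume_preserving_symm_measurableEquiv_toLp ι).measure_preimage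
    measurableSet_Icc.nullMeasurableSet, Real.volume_Icc_pi]

variable [DecidableEq ι]

theorem EuclideanSpace.real_norm_sq_eq_sq_add_sum_erase (z : EuclideanSpace ℝ ι) (L : ι) :
    ‖z‖ ^ 2 = z L ^ 2 + ∑ i ∈ Finset.univ.erase L, z i ^ 2 := by
  rw [EuclideanSpace.real_norm_sq_eq,
    Finset.add_sum_erase _ (fun i => z i ^ 2) (Finset.mem_univ L)]

def paraboloid (L : ι) (c : ℝ) : Set (EuclideanSpace ℝ ι) :=
  {y | 0 < y L ∧ ∑ i ∈ Finset.univ.erase L, y i ^ 2 < c * y L}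

theorem le_norm_sub_of_mem_paraboloid {L : ι} {c k : ℝ} {x y : EuclideanSpace ℝ ι}
    (hk : 0 ≤ k) (hck : 16 * c ≤ k) (hx : k ≤ ‖x‖) (hxL : x L ≤ k / 2)
    (hy : y ∈ paraboloid L c) : (k + y L) / 4 ≤ ‖x - y‖ := by
  obtain ⟨hyL, hy'⟩ := hy
  rcases le_or_gt k (y L) with hyk | hyk
  · calc (k + y L) / 4 ≤ -(x - y) L := by simp only [PiLp.sub_apply]; linarith
      _ ≤ ‖(x - y) L‖ := neg_le_abs _
      _ ≤ ‖x - y‖ := PiLp.norm_apply_le _ _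
  set w := EuclideanSpace.single L (y L)
  have hxw : 3 * k / 4 ≤ ‖x - w‖ := by
    have hsum : ∑ i ∈ Finset.univ.erase L, (x - w) i ^ 2 = ∑ i ∈ Finset.univ.erase L, x i ^ 2 :=
      Finset.sum_congr rfl fun i hi => by simp [w, Finset.ne_of_mem_erase hi]
    have h := EuclideanSpace.real_norm_sq_eq_sq_add_sum_erase (x - w) L
    rw [hsum, show (x - w) L = x L - y L by simp [w]] at h
    have := EuclideanSpace.real_norm_sq_eq_sq_add_sum_erase x L
    rw [← pow_le_pow_iff_left₀ (by positivity) (norm_nonneg _) two_ne_zero]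
    nlinarith [pow_le_pow_left₀ hk hx 2, mul_le_mul_of_nonneg_right hxL hyL.le,
      sq_nonneg (y L - k / 2)]
  have hyw : ‖y - w‖ ≤ k / 4 := by
    have hsum : ∑ i ∈ Finset.univ.erase L, (y - w) i ^ 2 = ∑ i ∈ Finset.univ.erase L, y i ^ 2 :=
      Finset.sum_congr rfl fun i hi => by simp [w, Finset.ne_of_mem_erase hi]
    have h := EuclideanSpace.real_norm_sq_eq_sq_add_sum_erase (y - w) L
    rw [hsum, show (y - w) L = 0 by simp [w]] at h
    rw [← pow_le_pow_iff_left₀ (norm_nonneg _) (by positivity) two_ne_zero]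
    nlinarith
  linarith [norm_sub_le_norm_sub_add_norm_sub x y w]

theorem volume_paraboloid_inter_le {L : ι} {c s : ℝ} (hc : 0 ≤ c) (hs : 0 ≤ s) :
    volume (paraboloid L c ∩ {y | y L < s ^ 2}) ≤
      ENNReal.ofReal ((2 * √c * s) ^ (Fintype.card ι - 1) * s ^ 2) := by
  set a : ι → ℝ := fun i => if i = L then 0 else -(√c * s)
  set b : ι → ℝ := fun i => if i = L then s ^ 2 else √c * s
  have hbox : paraboloid L c ∩ {y | y L < s ^ 2} ⊆ {y | ∀ i, y i ∈ Icc (a i) (b i)} := by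
    rintro y ⟨⟨hyL, hy'⟩, hys⟩ i
    by_cases hi : i = L
    · subst hi
      simp only [a, b, if_pos rfl]
      exact ⟨hyL.le, hys.le⟩
    · simp only [a, b, if_neg hi]
      refine abs_le_of_sq_le_sq' ?_ (by positivity)
      calc y i ^ 2 ≤ ∑ j ∈ Finset.univ.erase L, y j ^ 2 :=
            Finset.single_le_sum (f := fun j => y j ^ 2) (fun _ _ => sq_nonneg _)
              (Finset.mem_erase.mpr ⟨hi, Finset.mem_univ i⟩)
        _ ≤ c * s ^ 2 := hy'.le.trans (mul_le_mul_of_nonneg_left hys.le hc)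
        _ = (√c * s) ^ 2 := by rw [mul_pow, Real.sq_sqrt hc]
  calc volume (paraboloid L c ∩ {y | y L < s ^ 2})
      ≤ volume {y : EuclideanSpace ℝ ι | ∀ i, y i ∈ Icc (a i) (b i)} := measure_mono hbox
    _ = ∏ i, ENNReal.ofReal (b i - a i) := EuclideanSpace.volume_setOf_forall_mem_Icc a b
    _ = ENNReal.ofReal (s ^ 2) * ∏ i ∈ Finset.univ.erase L, ENNReal.ofReal (2 * √c * s) := by
      rw [← Finset.mul_prod_erase _ _ (Finset.mem_univ L)]
      congr 1
      · simp [a, b]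
      · exact Finset.prod_congr rfl fun i hi => by
          simp only [a, b, if_neg (Finset.ne_of_mem_erase hi)]
          ring_nf
    _ = ENNReal.ofReal ((2 * √c * s) ^ (Fintype.card ι - 1) * s ^ 2) := by
      rw [Finset.prod_const, Finset.card_erase_of_mem (Finset.mem_univ _), Finset.card_univ,
        ← ENNReal.ofReal_pow (by positivity), ← ENNReal.ofReal_mul (by positivity), mul_comm]

def paraboloidSlice (L : ι) (c k s : ℝ) : Set (EuclideanSpace ℝ ι) :=
  paraboloid L c ∩ {y | s ^ 2 / 4 ≤ k + y L ∧ k + y L < s ^ 2}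

theorem paraboloid_subset_iUnion_paraboloidSlice {L : ι} {c k : ℝ} (hk : 0 < k) :
    paraboloid L c ⊆ ⋃ j : ℕ, paraboloidSlice L c k (2 ^ (j + 1) * √k) := by
  intro y hy
  obtain ⟨j, hj, hj'⟩ := exists_nat_pow_near (x := (k + y L) / k) (y := 4)
    (by rw [le_div_iff₀ hk]; linarith [hy.1]) (by norm_num)
  rw [le_div_iff₀ hk] at hj
  rw [div_lt_iff₀ hk] at hj'
  have hsq : (2 ^ (j + 1) * √k) ^ 2 = 4 ^ (j + 1) * k := by
    rw [mul_pow, Real.sq_sqrt hk.le, ← pow_mul, mul_comm (j + 1) 2, pow_mul]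
    norm_num
  refine mem_iUnion.2 ⟨j, hy, ?_, ?_⟩ <;> rw [hsq]
  · rw [pow_succ]; linarith
  · exact hj'

theorem lintegral_paraboloidSlice_le {L : ι} {c k s : ℝ} {x : EuclideanSpace ℝ ι}
    (hN : 6 ≤ Fintype.card ι) (hc : 0 ≤ c) (hk : 0 ≤ k) (hck : 16 * c ≤ k) (hx : k ≤ ‖x‖)
    (hxL : x L ≤ k / 2) (hs : 1 ≤ s) :
    ∫⁻ y in paraboloidSlice L c k s, ENNReal.ofReal (‖x - y‖ ^ ((2 : ℝ) - Fintype.card ι)) ≤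
      ENNReal.ofReal (16 ^ (Fintype.card ι - 2) * (2 * √c) ^ (Fintype.card ι - 1) / s) := by
  have hdist : ∀ y ∈ paraboloidSlice L c k s, s ^ 2 / 16 ≤ ‖x - y‖ := fun y hy => by
    linarith [le_norm_sub_of_mem_paraboloid hk hck hx hxL hy.1, hy.2.1]
  have hsub : paraboloidSlice L c k s ⊆ paraboloid L c ∩ {y | y L < s ^ 2} :=
    fun y ⟨hy, _, hys⟩ => ⟨hy, show y L < s ^ 2 by linarith⟩
  have hexp : (2 : ℝ) - Fintype.card ι ≤ 0 := by
    have : (6 : ℝ) ≤ Fintype.card ι := by exact_mod_cast hN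
    linarith
  calc _ ≤ ENNReal.ofReal ((s ^ 2 / 16) ^ ((2 : ℝ) - Fintype.card ι)) *
        volume (paraboloidSlice L c k s) :=
      setLIntegral_ofReal_rpow_norm_sub_le (by positivity) hexp hdist
    _ ≤ ENNReal.ofReal (((s ^ 2 / 16) ^ (Fintype.card ι - 2))⁻¹) *
        ENNReal.ofReal ((2 * √c * s) ^ (Fintype.card ι - 1) * s ^ 2) := by
      rw [Real.rpow_two_sub_natCast (by positivity) (by omega)]
      gcongr
      exact (measure_mono hsub).trans (volume_paraboloid_inter_le hc (by positivity))
    _ ≤ _ := by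
      rw [← ENNReal.ofReal_mul (by positivity)]
      exact ENNReal.ofReal_le_ofReal (inv_pow_mul_pow_le_div_of_six_le hN (by positivity) hs)

theorem lintegral_paraboloid_le {L : ι} {c k : ℝ} {x : EuclideanSpace ℝ ι}
    (hN : 6 ≤ Fintype.card ι) (hc : 0 ≤ c) (hk : 1 ≤ k) (hck : 16 * c ≤ k) (hx : k ≤ ‖x‖)
    (hxL : x L ≤ k / 2) :
    ∫⁻ y in paraboloid L c, ENNReal.ofReal (‖x - y‖ ^ ((2 : ℝ) - Fintype.card ι)) ≤
      ENNReal.ofReal (16 ^ (Fintype.card ι - 2) * (2 * √c) ^ (Fintype.card ι - 1) / √k) := by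
  set K : ℝ := 16 ^ (Fintype.card ι - 2) * (2 * √c) ^ (Fintype.card ι - 1)
  have hs : ∀ j : ℕ, 1 ≤ 2 ^ (j + 1) * √k := fun j =>
    one_le_mul_of_one_le_of_one_le (one_le_pow₀ one_le_two) (Real.one_le_sqrt.2 hk)
  calc _ ≤ ∫⁻ y in ⋃ j : ℕ, paraboloidSlice L c k (2 ^ (j + 1) * √k),
        ENNReal.ofReal (‖x - y‖ ^ ((2 : ℝ) - Fintype.card ι)) :=
      lintegral_mono_set (paraboloid_subset_iUnion_paraboloidSlice (by linarith))
    _ ≤ ∑' j : ℕ, ∫⁻ y in paraboloidSlice L c k (2 ^ (j + 1) * √k),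
        ENNReal.ofReal (‖x - y‖ ^ ((2 : ℝ) - Fintype.card ι)) := lintegral_iUnion_le _ _
    _ ≤ ∑' j : ℕ, ENNReal.ofReal (K / √k / 2 / 2 ^ j) := ENNReal.tsum_le_tsum fun j =>
      (lintegral_paraboloidSlice_le hN hc (by linarith) hck hx hxL (hs j)).trans_eq
        (by congr 1; ring)
    _ = ENNReal.ofReal (K / √k) := by
      rw [← ENNReal.ofReal_tsum_of_nonneg (fun j => by positivity) (summable_geometric_two' _),
        tsum_geometric_two']

end

/-- Decay of the Newtonian potential of a round paraboloid
`P = {y_N > 0, |y'| < γ √y_N}` in the region `{|x| ≥ k, x_N ≤ k/2}`: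
`sup V_P → 0` as `k → ∞`. -/
theorem stmt_7 (N : ℕ) (hN : 6 ≤ N) (γ : ℝ)
    (P : Set (EuclideanSpace ℝ (Fin N)))
    (hP : P = {y : EuclideanSpace ℝ (Fin N) |
      0 < y (⟨N - 1, by omega⟩ : Fin N) ∧
      (∑ i ∈ Finset.univ.erase (⟨N - 1, by omega⟩ : Fin N), (y i) ^ 2)
        < γ ^ 2 * y (⟨N - 1, by omega⟩ : Fin N)})
    (αN : ℝ)
    (V : EuclideanSpace ℝ (Fin N) → ℝ)
    (hV : ∀ x, V x = αN * ∫ y in P, ‖x - y‖ ^ ((2 : ℝ) - N)) :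
    ∀ ε : ℝ, 0 < ε → ∃ k₀ : ℝ, ∀ k : ℝ, k₀ ≤ k →
      ∀ x : EuclideanSpace ℝ (Fin N), k ≤ ‖x‖ →
        x (⟨N - 1, by omega⟩ : Fin N) ≤ k / 2 → V x ≤ ε := by
  intro ε hε
  set K : ℝ := 16 ^ (N - 2) * (2 * √(γ ^ 2)) ^ (N - 1)
  have hlim : Tendsto (fun k : ℝ => |αN| * (K / √k)) atTop (𝓝 0) := by
    simpa [div_eq_mul_inv] using
      ((tendsto_inv_atTop_zero.comp Real.tendsto_sqrt_atTop).const_mul K).const_mul |αN|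
  obtain ⟨k₀, hk₀⟩ := eventually_atTop.1 ((hlim.eventually (ge_mem_nhds hε)).and
    ((eventually_ge_atTop 1).and (eventually_ge_atTop (16 * γ ^ 2))))
  refine ⟨k₀, fun k hk x hxk hxL => ?_⟩
  obtain ⟨hKk, hk1, hγk⟩ := hk₀ k hk
  have hP' : P = paraboloid ⟨N - 1, by omega⟩ (γ ^ 2) := hP
  have hlint :
      ∫⁻ y in P, ENNReal.ofReal (‖x - y‖ ^ ((2 : ℝ) - N)) ≤ ENNReal.ofReal (K / √k) := by
    rw [hP']
    simpa only [Fintype.card_fin] using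
      lintegral_paraboloid_le (by simpa using hN) (sq_nonneg γ) hk1 hγk hxk hxL
  have hint : ∫ y in P, ‖x - y‖ ^ ((2 : ℝ) - N) ≤ K / √k := by
    have hmeas : Measurable fun y : EuclideanSpace ℝ (Fin N) => ‖x - y‖ ^ ((2 : ℝ) - N) := by
      fun_prop
    rw [integral_eq_lintegral_of_nonneg_ae (ae_of_all _ fun y => by positivity)
      hmeas.aestronglyMeasurable]
    exact ENNReal.toReal_le_of_le_ofReal (by positivity) hlint
  calc V x ≤ |αN| * ∫ y in P, ‖x - y‖ ^ ((2 : ℝ) - N) :=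
        (hV x).trans_le (mul_le_mul_of_nonneg_right (le_abs_self _)
          (integral_nonneg fun y => by positivity))
    _ ≤ |αN| * (K / √k) := mul_le_mul_of_nonneg_left hint (abs_nonneg _)
    _ ≤ ε := hKk
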